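/- In a repeated zero-sum matrix game M with value v, suppose both players use ε-Hannan-consistent algorithms (so that each player's average external regret satisfies limsup r(t) ≤ ε almost surely). Then almost surely v − ε ≤ liminf_{t→∞} g(t) ≤ limsup_{t→∞} g(t) ≤ v + ε, where g(t) is player 1's average realized payoff after t rounds. -/

import Mathlib

open MeasureTheory Filter
open scoped BigOperators

/-- Expected payoff to player 1 in the matrix game `M` under mixed strategies `σ₁, σ₂`. -/
noncomputable def payoff {m n : ℕ} (M : Fin m → Fin n → ℝ)
    (σ₁ : Fin m → ℝ) (σ₂ : Fin n → ℝ) : ℝ :=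
  ∑ i, ∑ j, σ₁ i * M i j * σ₂ j

/-- The (minimax) value of the zero-sum matrix game `M`. -/
noncomputable def gameValue {m n : ℕ} (M : Fin m → Fin n → ℝ) : ℝ :=
  ⨅ σ₂ : stdSimplex ℝ (Fin n), ⨆ σ₁ : stdSimplex ℝ (Fin m), payoff M σ₁.1 σ₂.1

open Finset

/-!
Let `σ₁(t)`, `σ₂(t)` be the empirical distributions of the players' actions in the first `t`
rounds. Against `σ₂(t)` some pure action `i` of player 1 earns at least the value `v`, and the
average payoff `i` would have earned exceeds `g(t)` by at most the regret `r₁(t)`; hence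
`v ≤ g(t) + r₁(t)`. Symmetrically some column of `M` earns at most `v` against `σ₁(t)`, which gives
`g(t) ≤ v + r₂(t)`. Taking `liminf` and `limsup` concludes. Boundedness of the regrets, automatic
since `M` has finitely many entries, is what makes `limsup rₖ ≤ ε` meaningful: in `ℝ` the `limsup`
of a sequence unbounded above is the junk value `0`.
-/

section WeightedAverage

variable {ι : Type*} [Fintype ι] {w f : ι → ℝ} {c : ℝ}

lemma sum_mul_le_of_forall_le (hw : w ∈ stdSimplex ℝ ι) (h : ∀ i, f i ≤ c) :
    ∑ i, w i * f i ≤ c :=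
  calc ∑ i, w i * f i ≤ ∑ i, w i * c :=
        sum_le_sum fun i _ => mul_le_mul_of_nonneg_left (h i) (hw.1 i)
    _ = c := by rw [← sum_mul, hw.2, one_mul]

lemma le_sum_mul_of_forall_le (hw : w ∈ stdSimplex ℝ ι) (h : ∀ i, c ≤ f i) :
    c ≤ ∑ i, w i * f i :=
  calc c = ∑ i, w i * c := by rw [← sum_mul, hw.2, one_mul]
    _ ≤ ∑ i, w i * f i := sum_le_sum fun i _ => mul_le_mul_of_nonneg_left (h i) (hw.1 i)

end WeightedAverage

section MatrixGame

variable {m n : ℕ} (M : Fin m → Fin n → ℝ)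

lemma payoff_eq_sum_rows (σ₁ : Fin m → ℝ) (σ₂ : Fin n → ℝ) :
    payoff M σ₁ σ₂ = ∑ i, σ₁ i * ∑ j, σ₂ j * M i j := by
  simp only [payoff, mul_sum]
  exact sum_congr rfl fun i _ => sum_congr rfl fun j _ => by ring

lemma payoff_eq_sum_cols (σ₁ : Fin m → ℝ) (σ₂ : Fin n → ℝ) :
    payoff M σ₁ σ₂ = ∑ j, σ₂ j * ∑ i, σ₁ i * M i j := by
  simp only [payoff, mul_sum]
  rw [sum_comm]
  exact sum_congr rfl fun j _ => sum_congr rfl fun i _ => by ring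

lemma payoff_le_of_forall_row_le {σ₁ : Fin m → ℝ} {σ₂ : Fin n → ℝ} {c : ℝ}
    (hσ₁ : σ₁ ∈ stdSimplex ℝ (Fin m)) (h : ∀ i, ∑ j, σ₂ j * M i j ≤ c) :
    payoff M σ₁ σ₂ ≤ c :=
  payoff_eq_sum_rows M σ₁ σ₂ ▸ sum_mul_le_of_forall_le hσ₁ h

lemma le_payoff_of_forall_le_col {σ₁ : Fin m → ℝ} {σ₂ : Fin n → ℝ} {c : ℝ}
    (hσ₂ : σ₂ ∈ stdSimplex ℝ (Fin n)) (h : ∀ j, c ≤ ∑ i, σ₁ i * M i j) :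
    c ≤ payoff M σ₁ σ₂ :=
  payoff_eq_sum_cols M σ₁ σ₂ ▸ le_sum_mul_of_forall_le hσ₂ h

lemma bddAbove_range_payoff (σ₂ : Fin n → ℝ) :
    BddAbove (Set.range fun σ₁ : stdSimplex ℝ (Fin m) => payoff M σ₁ σ₂) := by
  obtain ⟨c, hc⟩ := (Set.finite_range fun i => ∑ j, σ₂ j * M i j).bddAbove
  exact ⟨c, by
    rintro _ ⟨σ₁, rfl⟩
    exact payoff_le_of_forall_row_le M σ₁.2 fun i => hc ⟨i, rfl⟩⟩

lemma bddBelow_range_iSup_payoff [Nonempty (Fin m)] :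
    BddBelow (Set.range fun σ₂ : stdSimplex ℝ (Fin n) =>
      ⨆ σ₁ : stdSimplex ℝ (Fin m), payoff M σ₁ σ₂) := by
  let σ₁ : stdSimplex ℝ (Fin m) := Classical.arbitrary _
  obtain ⟨c, hc⟩ := (Set.finite_range fun j => ∑ i, σ₁.1 i * M i j).bddBelow
  refine ⟨c, ?_⟩
  rintro _ ⟨σ₂, rfl⟩
  exact (le_payoff_of_forall_le_col M σ₂.2 fun j => hc ⟨j, rfl⟩).trans
    (le_ciSup (bddAbove_range_payoff M σ₂) σ₁)

lemma exists_gameValue_le_row [Nonempty (Fin m)] {σ₂ : Fin n → ℝ}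
    (hσ₂ : σ₂ ∈ stdSimplex ℝ (Fin n)) : ∃ i, gameValue M ≤ ∑ j, σ₂ j * M i j := by
  obtain ⟨i, hi⟩ := Finite.exists_max fun i => ∑ j, σ₂ j * M i j
  exact ⟨i, (ciInf_le (bddBelow_range_iSup_payoff M) ⟨σ₂, hσ₂⟩).trans
    (ciSup_le fun σ₁ => payoff_le_of_forall_row_le M σ₁.2 hi)⟩

lemma exists_col_le_gameValue [Nonempty (Fin n)] {σ₁ : Fin m → ℝ}
    (hσ₁ : σ₁ ∈ stdSimplex ℝ (Fin m)) : ∃ j, ∑ i, σ₁ i * M i j ≤ gameValue M := by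
  obtain ⟨j, hj⟩ := Finite.exists_min fun j => ∑ i, σ₁ i * M i j
  exact ⟨j, le_ciInf fun σ₂ => (le_payoff_of_forall_le_col M σ₂.2 hj).trans
    (le_ciSup (bddAbove_range_payoff M σ₂) ⟨σ₁, hσ₁⟩)⟩

end MatrixGame

section Empirical

variable {ι : Type*} [Fintype ι] [DecidableEq ι] (a : ℕ → ι) (t : ℕ)

noncomputable def empiricalDist : ι → ℝ := fun i => #{s ∈ range t | a s = i} / t

lemma sum_empiricalDist_mul (f : ι → ℝ) :
    ∑ i, empiricalDist a t i * f i = (∑ s ∈ range t, f (a s)) / t := by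
  simp only [empiricalDist, div_mul_eq_mul_div, ← sum_div]
  congr 1
  rw [← sum_fiberwise (range t) a]
  refine sum_congr rfl fun i _ => ?_
  rw [sum_congr rfl fun s hs => congrArg f (mem_filter.1 hs).2, sum_const, nsmul_eq_mul]

lemma empiricalDist_mem_stdSimplex (ht : t ≠ 0) : empiricalDist a t ∈ stdSimplex ℝ ι := by
  refine ⟨fun i => by unfold empiricalDist; positivity, ?_⟩
  simpa [ht] using sum_empiricalDist_mul a t 1

end Empirical

section Regret

noncomputable def runningAverage (x : ℕ → ℝ) (t : ℕ) : ℝ := (∑ s ∈ range t, x s) / t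

/-- `u i s` is the payoff the fixed action `i` would have earned in round `s`, and `x s` the payoff
actually earned. -/
noncomputable def regret {ι : Type*} [Fintype ι] (u : ι → ℕ → ℝ) (x : ℕ → ℝ) (t : ℕ) : ℝ :=
  ((⨆ i, ∑ s ∈ range t, u i s) - ∑ s ∈ range t, x s) / t

variable {ι : Type*} [Fintype ι] {u : ι → ℕ → ℝ} {x y : ℕ → ℝ} {C : ℝ} (t : ℕ)

lemma runningAverage_sub :
    runningAverage (fun s => x s - y s) t = runningAverage x t - runningAverage y t := by
  simp only [runningAverage, sum_sub_distrib, sub_div]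

lemma abs_sum_range_le_mul (hx : ∀ s, |x s| ≤ C) : |∑ s ∈ range t, x s| ≤ t * C :=
  calc |∑ s ∈ range t, x s| ≤ ∑ s ∈ range t, |x s| := abs_sum_le_sum_abs _ _
    _ ≤ ∑ _s ∈ range t, C := sum_le_sum fun s _ => hx s
    _ = t * C := by simp

lemma abs_runningAverage_le (hx : ∀ s, |x s| ≤ C) : |runningAverage x t| ≤ C := by
  rw [runningAverage, abs_div, Nat.abs_cast]
  exact div_le_of_le_mul₀ t.cast_nonneg ((abs_nonneg _).trans (hx 0))
    (by rw [mul_comm]; exact abs_sum_range_le_mul t hx)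

lemma regret_le_two_mul [Nonempty ι] (hu : ∀ i s, |u i s| ≤ C) (hx : ∀ s, |x s| ≤ C) :
    regret u x t ≤ 2 * C := by
  have hsup : ⨆ i, ∑ s ∈ range t, u i s ≤ t * C :=
    ciSup_le fun i => (le_abs_self _).trans (abs_sum_range_le_mul t (hu i))
  have hsum := neg_le_of_abs_le (abs_sum_range_le_mul t hx)
  refine div_le_of_le_mul₀ t.cast_nonneg ?_ (by linarith)
  linarith [(abs_nonneg _).trans (hx 0)]

lemma runningAverage_sub_le_regret (i : ι) :
    runningAverage (u i) t - runningAverage x t ≤ regret u x t := by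
  rw [runningAverage, runningAverage, ← sub_div]
  exact div_le_div_of_nonneg_right
    (sub_le_sub_right (le_ciSup (f := fun i => ∑ s ∈ range t, u i s)
      (Set.finite_range _).bddAbove i) _) t.cast_nonneg

end Regret

section RepeatedGame

variable {m n : ℕ} (M : Fin m → Fin n → ℝ) (I : ℕ → Fin m) (J : ℕ → Fin n) {t : ℕ}

lemma gameValue_le_runningAverage_add_regret [Nonempty (Fin m)] (ht : t ≠ 0) :
    gameValue M ≤ runningAverage (fun s => M (I s) (J s)) t +
      regret (fun i s => M i (J s)) (fun s => M (I s) (J s)) t := by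
  obtain ⟨i, hi⟩ := exists_gameValue_le_row M (empiricalDist_mem_stdSimplex J t ht)
  rw [sum_empiricalDist_mul] at hi
  have := runningAverage_sub_le_regret
    (u := fun i s => M i (J s)) (x := fun s => M (I s) (J s)) t i
  unfold runningAverage at this ⊢
  linarith

lemma runningAverage_le_gameValue_add_regret [Nonempty (Fin n)] (ht : t ≠ 0) :
    runningAverage (fun s => M (I s) (J s)) t ≤ gameValue M +
      regret (fun j s => 1 - M (I s) j) (fun s => 1 - M (I s) (J s)) t := by
  obtain ⟨j, hj⟩ := exists_col_le_gameValue M (empiricalDist_mem_stdSimplex I t ht)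
  rw [sum_empiricalDist_mul] at hj
  have := runningAverage_sub_le_regret
    (u := fun j s => 1 - M (I s) j) (x := fun s => 1 - M (I s) (J s)) t j
  rw [runningAverage_sub, runningAverage_sub] at this
  unfold runningAverage at this ⊢
  linarith

end RepeatedGame

section LimitBounds

variable {α : Type*} {f : Filter α} [f.NeBot] {u r : α → ℝ} {c ε : ℝ}

lemma le_liminf_of_le_add_of_limsup_le (hu : IsBoundedUnder (· ≤ ·) f u)
    (hr : IsBoundedUnder (· ≤ ·) f r) (h : ∀ᶠ a in f, c ≤ u a + r a) (hrε : limsup r f ≤ ε) :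
    c - ε ≤ liminf u f := by
  refine le_of_forall_pos_le_add fun δ hδ => ?_
  have hr' : ∀ᶠ a in f, r a < ε + δ := eventually_lt_of_limsup_lt (by linarith) hr
  have : c - (ε + δ) ≤ liminf u f := le_liminf_of_le hu.isCoboundedUnder_ge <| by
    filter_upwards [h, hr'] with a h₁ h₂
    linarith
  linarith

lemma limsup_le_add_of_le_add_of_limsup_le (hu : IsBoundedUnder (· ≥ ·) f u)
    (hr : IsBoundedUnder (· ≤ ·) f r) (h : ∀ᶠ a in f, u a ≤ c + r a) (hrε : limsup r f ≤ ε) :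
    limsup u f ≤ c + ε := by
  refine le_of_forall_pos_le_add fun δ hδ => ?_
  have hr' : ∀ᶠ a in f, r a < ε + δ := eventually_lt_of_limsup_lt (by linarith) hr
  have : limsup u f ≤ c + (ε + δ) := limsup_le_of_le hu.isCoboundedUnder_le <| by
    filter_upwards [h, hr'] with a h₁ h₂
    linarith
  linarith

end LimitBounds

theorem stmt1_general {m n : ℕ} [NeZero m] [NeZero n]
    {Ω : Type*} [MeasurableSpace Ω] (P : Measure Ω)
    (M : Fin m → Fin n → ℝ)
    (I : Ω → ℕ → Fin m) (J : Ω → ℕ → Fin n) (ε : ℝ)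
    (hHC1 : ∀ᵐ ω ∂P, limsup (fun t : ℕ =>
        ((⨆ i, ∑ s ∈ Finset.range t, M i (J ω s)) -
          ∑ s ∈ Finset.range t, M (I ω s) (J ω s)) / (t : ℝ)) atTop ≤ ε)
    (hHC2 : ∀ᵐ ω ∂P, limsup (fun t : ℕ =>
        ((⨆ j, ∑ s ∈ Finset.range t, (1 - M (I ω s) j)) -
          ∑ s ∈ Finset.range t, (1 - M (I ω s) (J ω s))) / (t : ℝ)) atTop ≤ ε) :
    ∀ᵐ ω ∂P,
      gameValue M - ε ≤ liminf (fun t : ℕ =>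
          (∑ s ∈ Finset.range t, M (I ω s) (J ω s)) / (t : ℝ)) atTop ∧
      limsup (fun t : ℕ =>
          (∑ s ∈ Finset.range t, M (I ω s) (J ω s)) / (t : ℝ)) atTop ≤ gameValue M + ε := by
  filter_upwards [hHC1, hHC2] with ω h₁ h₂
  have hM i j : |M i j| ≤ ‖M‖ := (norm_le_pi_norm (M i) j).trans (norm_le_pi_norm M i)
  have hM' i j : |1 - M i j| ≤ 1 + ‖M‖ := (abs_sub _ _).trans (by simpa using hM i j)
  have hg : IsBoundedUnder (· ≤ ·) atTop
      fun t => |runningAverage (fun s => M (I ω s) (J ω s)) t| :=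
    isBoundedUnder_of ⟨_, fun t => abs_runningAverage_le t fun s => hM _ _⟩
  rw [isBoundedUnder_le_abs] at hg
  have hr₁ := isBoundedUnder_of (f := atTop) ⟨_, fun t => regret_le_two_mul
    (u := fun i s => M i (J ω s)) (x := fun s => M (I ω s) (J ω s)) t
    (fun _ _ => hM _ _) fun _ => hM _ _⟩
  have hr₂ := isBoundedUnder_of (f := atTop) ⟨_, fun t => regret_le_two_mul
    (u := fun j s => 1 - M (I ω s) j) (x := fun s => 1 - M (I ω s) (J ω s)) t
    (fun _ _ => hM' _ _) fun _ => hM' _ _⟩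
  exact ⟨le_liminf_of_le_add_of_limsup_le hg.1 hr₁ ((eventually_ne_atTop 0).mono fun t ht =>
      gameValue_le_runningAverage_add_regret M (I ω) (J ω) ht) h₁,
    limsup_le_add_of_le_add_of_limsup_le hg.2 hr₂ ((eventually_ne_atTop 0).mono fun t ht =>
      runningAverage_le_gameValue_add_regret M (I ω) (J ω) ht) h₂⟩

/-- If both players of the repeated zero-sum matrix game `M` (with value `v`) are
ε-Hannan consistent, then almost surely
`v - ε ≤ liminf g(t) ≤ limsup g(t) ≤ v + ε`,
where `g(t)` is player 1's average realized payoff. -/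
theorem stmt1 {m n : ℕ} [NeZero m] [NeZero n]
    {Ω : Type*} [MeasurableSpace Ω] (P : Measure Ω) [IsProbabilityMeasure P]
    (M : Fin m → Fin n → ℝ) (hM : ∀ i j, M i j ∈ Set.Icc (0:ℝ) 1)
    (I : Ω → ℕ → Fin m) (J : Ω → ℕ → Fin n) (ε : ℝ) (hε : 0 ≤ ε)
    (hHC1 : ∀ᵐ ω ∂P, limsup (fun t : ℕ =>
        ((⨆ i, ∑ s ∈ Finset.range t, M i (J ω s)) -
          ∑ s ∈ Finset.range t, M (I ω s) (J ω s)) / (t : ℝ)) atTop ≤ ε)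
    (hHC2 : ∀ᵐ ω ∂P, limsup (fun t : ℕ =>
        ((⨆ j, ∑ s ∈ Finset.range t, (1 - M (I ω s) j)) -
          ∑ s ∈ Finset.range t, (1 - M (I ω s) (J ω s))) / (t : ℝ)) atTop ≤ ε) :
    ∀ᵐ ω ∂P,
      gameValue M - ε ≤ liminf (fun t : ℕ =>
          (∑ s ∈ Finset.range t, M (I ω s) (J ω s)) / (t : ℝ)) atTop ∧
      limsup (fun t : ℕ =>
          (∑ s ∈ Finset.range t, M (I ω s) (J ω s)) / (t : ℝ)) atTop ≤ gameValue M + ε :=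
  stmt1_general P M I J ε hHC1 hHC2
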